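/- Let G be a nontrivial virtually cyclic group such that either (a) G is finite and isomorphic to ℤ/2, or (b) G is torsion-free, or (c) G is isomorphic to G₀ ⋊_θ ℤ/2 for some torsion-free group G₀ and homomorphism θ : ℤ/2 → Aut(G₀). Then G is isomorphic to one of the following four groups: ℤ/2, ℤ, ℤ × ℤ/2, or the infinite dihedral group ℤ ⋊ ℤ/2 (where the generator of ℤ/2 acts on ℤ by negation). -/

import Mathlib

/-- The automorphism of `ℤ` (written multiplicatively) given by negation. -/
def negAutZ : MulAut (Multiplicative ℤ) := MulEquiv.inv (Multiplicative ℤ)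

lemma negAutZ_sq : negAutZ ^ 2 = 1 := by
  ext z
  simp [negAutZ, pow_succ]

/-- The action of `ℤ/2` on `ℤ` in which the generator acts by negation. -/
def dihedralTwist : Multiplicative (ZMod 2) →* MulAut (Multiplicative ℤ) where
  toFun a := negAutZ ^ (Multiplicative.toAdd a).val
  map_one' := by
    show negAutZ ^ (Multiplicative.toAdd (1 : Multiplicative (ZMod 2))).val = 1
    simp
  map_mul' x y := by
    show negAutZ ^ (Multiplicative.toAdd x + Multiplicative.toAdd y).val = _
    rw [ZMod.val_add, ← pow_eq_pow_mod _ negAutZ_sq, pow_add]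

/-- The infinite dihedral group, as the semidirect product `ℤ ⋊ ℤ/2` where the
generator of `ℤ/2` acts on `ℤ` by negation. -/
abbrev InfiniteDihedral : Type := Multiplicative ℤ ⋊[dihedralTwist] Multiplicative (ZMod 2)

/-- A monoid is torsion-free if no element other than `1` has finite order
(the definition `Monoid.IsTorsionFree` of Mathlib (Dec 2024), since removed). -/
def Monoid.IsTorsionFree (G : Type*) [Monoid G] : Prop :=
  ∀ g : G, g ≠ 1 → ¬IsOfFinOrder g

/-- A witness that `G` is isomorphic to a semidirect product `G₀ ⋊ ℤ/2` with `G₀`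
torsion-free. -/
structure TorsionFreeByZTwoWitness (G : Type) [Group G] where
  G₀ : Type
  [grp : Group G₀]
  θ : Multiplicative (ZMod 2) →* MulAut G₀
  torsionFree : Monoid.IsTorsionFree G₀
  iso : G ≃* (G₀ ⋊[θ] Multiplicative (ZMod 2))

/-! A torsion-free group `X` with a cyclic subgroup of finite index is cyclic. The normal core
`N = ⟨a⟩` of that subgroup is normal of finite index `m`, so every `t` conjugates `a` to some
`a ^ k` and has `t ^ m = a ^ j`; as conjugation by `t` fixes `t ^ m`, `a ^ (k * j) = a ^ j`, and
torsion-freeness forces `k = 1` (or `t = 1`). So `N` is central, the transfer `X → N` is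
`g ↦ g ^ m`, and torsion-freeness makes it injective: `X` embeds in the cyclic group `N`.

In the semidirect case `G₀` is a subgroup of a virtually cyclic group, hence virtually cyclic,
hence trivial or `ℤ`; and `ℤ/2` acts on `ℤ` either trivially or by negation. -/

open Subgroup

def Group.IsVirtuallyCyclic (G : Type*) [Group G] : Prop :=
  ∃ H : Subgroup G, IsCyclic H ∧ H.FiniteIndex

variable {X Y : Type*} [Group X] [Group Y]

namespace Monoid.IsTorsionFree

theorem eq_one_of_pow_eq_one (htf : Monoid.IsTorsionFree X) {g : X} {n : ℕ} (hn : n ≠ 0)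
    (h : g ^ n = 1) : g = 1 := by
  by_contra hg
  exact htf g hg (isOfFinOrder_iff_pow_eq_one.mpr ⟨n, Nat.pos_of_ne_zero hn, h⟩)

theorem infinite [Nontrivial X] (htf : Monoid.IsTorsionFree X) : Infinite X := by
  refine not_finite_iff_infinite.mp fun _ => ?_
  obtain ⟨g, hg⟩ := exists_ne (1 : X)
  exact htf g hg (isOfFinOrder_of_finite g)

theorem nonempty_mulEquiv_int [IsCyclic X] [Nontrivial X] (htf : Monoid.IsTorsionFree X) :
    Nonempty (X ≃* Multiplicative ℤ) :=
  have := htf.infinite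
  ⟨intCyclicMulEquiv.symm⟩

theorem commute_of_conj_mem_zpowers (htf : Monoid.IsTorsionFree X) {a t : X}
    (hconj : t * a * t⁻¹ ∈ zpowers a) {m : ℕ} (hm : m ≠ 0) (hpow : t ^ m ∈ zpowers a) :
    Commute t a := by
  obtain ⟨k, hk⟩ := mem_zpowers_iff.mp hconj
  obtain ⟨j, hj⟩ := mem_zpowers_iff.mp hpow
  rcases eq_or_ne a 1 with rfl | ha
  · exact Commute.one_right t
  have hconj_pow : a ^ (k * j) = a ^ j := by
    calc a ^ (k * j) = t * a ^ j * t⁻¹ := by rw [zpow_mul, hk, conj_zpow]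
      _ = a ^ j := by rw [hj, (Commute.self_pow t m).eq, mul_inv_cancel_right]
  have hkj : k * j = j := injective_zpow_iff_not_isOfFinOrder.mpr (htf a ha) hconj_pow
  rcases eq_or_ne j 0 with rfl | hj0
  · rw [zpow_zero, eq_comm] at hj
    rw [htf.eq_one_of_pow_eq_one hm hj]
    exact Commute.one_left a
  · have hk1 : k = 1 := by
      simpa [hj0] using hkj
    rw [hk1, zpow_one, eq_comm, mul_inv_eq_iff_eq_mul] at hk
    exact hk

theorem le_center_of_isCyclic (htf : Monoid.IsTorsionFree X) (N : Subgroup X) [N.Normal]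
    [IsCyclic N] [N.FiniteIndex] : N ≤ center X := by
  obtain ⟨a, rfl⟩ := (N.isCyclic_iff_exists_zpowers_eq_top).mp ‹IsCyclic N›
  have hcomm (t : X) : Commute t a :=
    htf.commute_of_conj_mem_zpowers (Normal.conj_mem inferInstance _ (mem_zpowers a) t)
      FiniteIndex.index_ne_zero (pow_index_mem _ t)
  rw [zpowers_le]
  exact mem_center_iff.mpr fun t => (hcomm t).eq

open scoped IsMulCommutative in
theorem isCyclic_of_le_center (htf : Monoid.IsTorsionFree X) (N : Subgroup X) [IsCyclic N]
    [N.FiniteIndex] (hN : N ≤ center X) : IsCyclic X := by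
  have htransfer (g : X) : (MonoidHom.id N).transfer g = ⟨g ^ N.index, _⟩ :=
    MonoidHom.transfer_eq_pow _ g fun k g₀ hk => by
      calc g₀⁻¹ * g ^ k * g₀ = g₀ * (g₀⁻¹ * g ^ k * g₀) * g₀⁻¹ := by
            rw [mem_center_iff.mp (hN hk) g₀, mul_inv_cancel_right]
        _ = g ^ k := by group
  refine isCyclic_of_injective ((MonoidHom.id N).transfer) ?_
  rw [injective_iff_map_eq_one]
  intro g hg
  rw [htransfer, Subtype.ext_iff] at hg
  exact htf.eq_one_of_pow_eq_one FiniteIndex.index_ne_zero hg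

end Monoid.IsTorsionFree

namespace Group.IsVirtuallyCyclic

theorem of_injective {f : X →* Y} (hf : Function.Injective f) (h : Group.IsVirtuallyCyclic Y) :
    Group.IsVirtuallyCyclic X := by
  obtain ⟨H, _, _⟩ := h
  refine ⟨H.comap f, isCyclic_of_injective (f.subgroupComap H) ?_, ?_⟩
  · intro x y hxy
    exact Subtype.ext (hf (congrArg Subtype.val hxy))
  · exact ⟨by rw [index_comap]; exact FiniteIndex.index_ne_zero⟩

theorem isCyclic_of_isTorsionFree (h : Group.IsVirtuallyCyclic X)
    (htf : Monoid.IsTorsionFree X) : IsCyclic X := by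
  obtain ⟨H, _, _⟩ := h
  have : IsCyclic H.normalCore := isCyclic_of_le H.normalCore_le
  exact htf.isCyclic_of_le_center H.normalCore (htf.le_center_of_isCyclic H.normalCore)

end Group.IsVirtuallyCyclic

theorem MulAut.int_eq_one_or_negAutZ (e : MulAut (Multiplicative ℤ)) : e = 1 ∨ e = negAutZ := by
  rcases Int.addEquiv_eq_refl_or_neg (AddEquiv.toMultiplicative.symm e) with h | h
  · left
    ext x
    simpa using DFunLike.congr_fun h x.toAdd
  · right
    ext x
    simpa [negAutZ] using DFunLike.congr_fun h x.toAdd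

theorem eq_one_or_eq_dihedralTwist (θ : Multiplicative (ZMod 2) →* MulAut (Multiplicative ℤ)) :
    θ = 1 ∨ θ = dihedralTwist := by
  have hext (φ : Multiplicative (ZMod 2) →* MulAut (Multiplicative ℤ))
      (h : θ (Multiplicative.ofAdd 1) = φ (Multiplicative.ofAdd 1)) : θ = φ := by
    refine MonoidHom.ext fun a => ?_
    obtain rfl | rfl : a = 1 ∨ a = Multiplicative.ofAdd 1 := by revert a; decide
    exacts [(map_one θ).trans (map_one φ).symm, h]
  rcases MulAut.int_eq_one_or_negAutZ (θ (Multiplicative.ofAdd 1)) with h | h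
  · exact Or.inl (hext 1 h)
  · exact Or.inr (hext dihedralTwist (h.trans (pow_one negAutZ).symm))

namespace SemidirectProduct

variable {N H : Type*} [Group N] [Group H]

def mulEquivRightOfSubsingleton [Subsingleton N] (φ : H →* MulAut N) : N ⋊[φ] H ≃* H where
  toFun := rightHom
  invFun := inr
  left_inv _ := SemidirectProduct.ext (Subsingleton.elim _ _) rfl
  right_inv _ := rfl
  map_mul' := map_mul rightHom

end SemidirectProduct

theorem nonempty_mulEquiv_prod_or_infiniteDihedral
    {θ : Multiplicative (ZMod 2) →* MulAut (Multiplicative ℤ)}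
    (e : X ≃* Multiplicative ℤ ⋊[θ] Multiplicative (ZMod 2)) :
    Nonempty (X ≃* Multiplicative ℤ × Multiplicative (ZMod 2)) ∨
      Nonempty (X ≃* InfiniteDihedral) := by
  rcases eq_one_or_eq_dihedralTwist θ with rfl | rfl
  exacts [Or.inl ⟨e.trans SemidirectProduct.mulEquivProd⟩, Or.inr ⟨e⟩]

/-- a nontrivial virtually cyclic group which is (a) finite and isomorphic
to `ℤ/2`, or (b) torsion-free, or (c) isomorphic to `G₀ ⋊ ℤ/2` with `G₀` torsion-free,
is isomorphic to one of: `ℤ/2`, `ℤ`, `ℤ × ℤ/2`, or the infinite dihedral group. -/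
theorem stmt_6 (G : Type) [Group G] [Nontrivial G]
    (hvc : ∃ H : Subgroup G, IsCyclic H ∧ H.FiniteIndex)
    (h : (Finite G ∧ Nonempty (G ≃* Multiplicative (ZMod 2))) ∨
         Monoid.IsTorsionFree G ∨
         Nonempty (TorsionFreeByZTwoWitness G)) :
    Nonempty (G ≃* Multiplicative (ZMod 2)) ∨
      Nonempty (G ≃* Multiplicative ℤ) ∨
      Nonempty (G ≃* Multiplicative ℤ × Multiplicative (ZMod 2)) ∨
      Nonempty (G ≃* InfiniteDihedral) := by
  rcases h with ⟨-, he⟩ | htf | ⟨G₀, θ, htf₀, e⟩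
  · exact Or.inl he
  · have : IsCyclic G := Group.IsVirtuallyCyclic.isCyclic_of_isTorsionFree hvc htf
    exact Or.inr (Or.inl htf.nonempty_mulEquiv_int)
  have hvc₀ : Group.IsVirtuallyCyclic G₀ :=
    .of_injective (f := e.symm.toMonoidHom.comp SemidirectProduct.inl)
      (e.symm.injective.comp SemidirectProduct.inl_injective) hvc
  have : IsCyclic G₀ := hvc₀.isCyclic_of_isTorsionFree htf₀
  rcases subsingleton_or_nontrivial G₀ with _ | _
  · exact Or.inl ⟨e.trans (SemidirectProduct.mulEquivRightOfSubsingleton θ)⟩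
  obtain ⟨e₀⟩ := htf₀.nonempty_mulEquiv_int
  exact Or.inr (Or.inr (nonempty_mulEquiv_prod_or_infiniteDihedral
    (e.trans (SemidirectProduct.congr' e₀ (MulEquiv.refl _)))))
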